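/- Let ρ be a 2×2 complex density matrix (positive semidefinite with trace 1) with off-diagonal entry ρ_12 = ⟨1|ρ|2⟩. Then the geometric measure of coherence equals C_g(ρ) = 1/2 - (1/2)·√(1 - 4|ρ_12|²). -/

import Mathlib

open scoped ComplexOrder

open Matrix Classical in
/-- The positive semidefinite square root of a matrix (junk value `0` if not PSD). -/
noncomputable def msqrt {d : ℕ} (A : Matrix (Fin d) (Fin d) ℂ) : Matrix (Fin d) (Fin d) ℂ :=
  if h : A.PosSemidef then
    (h.1.eigenvectorUnitary : Matrix (Fin d) (Fin d) ℂ) *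
      diagonal ((↑) ∘ (Real.sqrt ∘ h.1.eigenvalues)) *
      (star h.1.eigenvectorUnitary : Matrix (Fin d) (Fin d) ℂ)
  else 0

/-- A density matrix: positive semidefinite with trace 1. -/
def IsDensity {d : ℕ} (ρ : Matrix (Fin d) (Fin d) ℂ) : Prop :=
  ρ.PosSemidef ∧ ρ.trace = 1

/-- An incoherent state: a diagonal density matrix. -/
def IsIncoherent {d : ℕ} (σ : Matrix (Fin d) (Fin d) ℂ) : Prop :=
  IsDensity σ ∧ σ.IsDiag

/-- The fidelity `F(ρ,σ) = (Tr √(√σ ρ √σ))²`. -/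
noncomputable def fid {d : ℕ} (ρ σ : Matrix (Fin d) (Fin d) ℂ) : ℝ :=
  ((msqrt (msqrt σ * ρ * msqrt σ)).trace.re) ^ 2

/-- The geometric measure of coherence `C_g(ρ) = 1 - sup {F(ρ,σ) : σ incoherent}`. -/
noncomputable def Cg {d : ℕ} (ρ : Matrix (Fin d) (Fin d) ℂ) : ℝ :=
  1 - sSup {x : ℝ | ∃ σ : Matrix (Fin d) (Fin d) ℂ, IsIncoherent σ ∧ x = fid ρ σ}

open Matrix

open scoped MatrixOrder in
lemma msqrt_eq {d : ℕ} {A B : Matrix (Fin d) (Fin d) ℂ} (hA : A.PosSemidef)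
    (hB : B.PosSemidef) (h : B * B = A) : msqrt A = B := by
  rw [msqrt, dif_pos hA]
  have h1 := CFC.sqrt_unique (a := A) h hB.nonneg
  rw [CFC.sqrt_eq_real_sqrt A hA.nonneg, cfcₙ_eq_cfc, hA.1.cfc_eq, IsHermitian.cfc,
    Unitary.conjStarAlgAut_apply] at h1
  exact h1

lemma psd_smul_real {n : ℕ} {M : Matrix (Fin n) (Fin n) ℂ} (hM : M.PosSemidef) {r : ℝ}
    (hr : 0 ≤ r) : ((r : ℂ) • M).PosSemidef := by
  refine Matrix.PosSemidef.of_dotProduct_mulVec_nonneg ?_ fun x => ?_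
  · unfold Matrix.IsHermitian
    rw [conjTranspose_smul, hM.1]; simp
  · rw [smul_mulVec, dotProduct_smul]
    exact mul_nonneg (Complex.zero_le_real.mpr hr) (hM.dotProduct_mulVec_nonneg x)

lemma psd_diag_nonneg {n : ℕ} {M : Matrix (Fin n) (Fin n) ℂ} (hM : M.PosSemidef) (i : Fin n) :
    0 ≤ M i i := by
  simpa [dotProduct, Pi.single_apply, mulVec] using hM.dotProduct_mulVec_nonneg (Pi.single i 1)

lemma sq2 (M : Matrix (Fin 2) (Fin 2) ℂ) :
    M * M = M.trace • M - M.det • (1 : Matrix (Fin 2) (Fin 2) ℂ) := by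
  ext i j
  fin_cases i <;> fin_cases j <;>
    simp [mul_apply, Fin.sum_univ_two, trace_fin_two, det_fin_two, one_apply] <;> ring

lemma psd_det_sq {n : ℕ} {M : Matrix (Fin n) (Fin n) ℂ} (hM : M.PosSemidef) :
    M.det = (Real.sqrt (M.det.re) ^ 2 : ℝ) := by
  have h1 : M.det = ((∏ i, hM.1.eigenvalues i : ℝ) : ℂ) := by
    rw [hM.1.det_eq_prod_eigenvalues]; push_cast; rfl
  have h : 0 ≤ ∏ i, hM.1.eigenvalues i := Finset.prod_nonneg fun i _ => hM.eigenvalues_nonneg i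
  rw [h1]
  simp only [Complex.ofReal_re]
  rw [Real.sq_sqrt h]

lemma trace_msqrt_fin2 {M : Matrix (Fin 2) (Fin 2) ℂ} (hM : M.PosSemidef) :
    (msqrt M).trace = ((Real.sqrt (M.trace.re + 2 * Real.sqrt M.det.re) : ℝ) : ℂ) := by
  set T : ℝ := M.trace.re with hTdef
  set rD : ℝ := Real.sqrt M.det.re with hrDdef
  have hrD : 0 ≤ rD := Real.sqrt_nonneg _
  have h00 := (Complex.nonneg_iff.mp (psd_diag_nonneg hM 0))
  have h11 := (Complex.nonneg_iff.mp (psd_diag_nonneg hM 1))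
  have hTr : M.trace = ((T : ℝ) : ℂ) := by
    rw [trace_fin_two] at *
    apply Complex.ext <;> simp [hTdef, ← h00.2, ← h11.2]
  have hT : 0 ≤ T := by
    have : T = (M 0 0).re + (M 1 1).re := by rw [hTdef, trace_fin_two]; simp
    rw [this]; exact add_nonneg h00.1 h11.1
  have hDet : M.det = ((rD ^ 2 : ℝ) : ℂ) := psd_det_sq hM
  set s : ℝ := T + 2 * rD with hsdef
  have hs : 0 ≤ s := by positivity
  rcases eq_or_lt_of_le hs with hs0 | hs0
  · -- s = 0 : M = 0
    have hT0 : T = 0 := by nlinarith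
    have hrD0 : rD = 0 := by nlinarith
    have h000 : M 0 0 = 0 := by
      have : (M 0 0).re = 0 := by
        have : T = (M 0 0).re + (M 1 1).re := by rw [hTdef, trace_fin_two]; simp
        nlinarith [h00.1, h11.1]
      apply Complex.ext <;> simp [this, ← h00.2]
    have h110 : M 1 1 = 0 := by
      have : (M 1 1).re = 0 := by
        have : T = (M 0 0).re + (M 1 1).re := by rw [hTdef, trace_fin_two]; simp
        nlinarith [h00.1, h11.1]
      apply Complex.ext <;> simp [this, ← h11.2]
    have h10 : M 1 0 = starRingEnd ℂ (M 0 1) := by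
      have := hM.1
      rw [Matrix.IsHermitian] at this
      have := congrFun (congrFun this 1) 0
      simpa [conjTranspose_apply] using this.symm
    have hb : M 0 1 = 0 := by
      have key := hM.dotProduct_mulVec_nonneg ![M 0 1, -1]
      have : star (![M 0 1, -1]) ⬝ᵥ (M *ᵥ ![M 0 1, -1]) =
          -(2 * ((Complex.normSq (M 0 1) : ℝ) : ℂ)) := by
        simp [dotProduct, mulVec, Fin.sum_univ_two, h000, h110, h10, Complex.normSq_eq_conj_mul_self]
        ring
      rw [this] at key
      have : Complex.normSq (M 0 1) ≤ 0 := by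
        have := Complex.nonneg_iff.mp key
        have h := this.1
        simp at h
        linarith
      exact Complex.normSq_eq_zero.mp (le_antisymm this (Complex.normSq_nonneg _))
    have hM0 : M = 0 := by
      ext i j
      fin_cases i <;> fin_cases j <;> simp [h000, h110, hb, h10]
    rw [hM0, msqrt_eq Matrix.PosSemidef.zero Matrix.PosSemidef.zero (by simp)]
    rw [← hs0]
    simp
  · -- s > 0
    set c : ℝ := (Real.sqrt s)⁻¹ with hcdef
    have hc : 0 ≤ c := by positivity
    set B : Matrix (Fin 2) (Fin 2) ℂ := (c : ℂ) • (M + (rD : ℂ) • 1) with hBdef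
    have hB : B.PosSemidef :=
      psd_smul_real (hM.add (psd_smul_real Matrix.PosSemidef.one hrD)) hc
    have hNN : (M + (rD : ℂ) • 1) * (M + (rD : ℂ) • 1) = ((s : ℝ) : ℂ) • M := by
      rw [add_mul, mul_add, mul_add, sq2 M, hTr, hDet]
      simp only [smul_mul_assoc, mul_smul_comm, one_mul, mul_one, smul_smul]
      rw [hsdef]
      push_cast
      module
    have hBB : B * B = M := by
      rw [hBdef, smul_mul_assoc, mul_smul_comm, smul_smul, hNN, smul_smul]
      have : (c : ℂ) * (c : ℂ) * ((s : ℝ) : ℂ) = 1 := by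
        have : c * c * s = 1 := by
          rw [hcdef, ← mul_inv, Real.mul_self_sqrt hs, inv_mul_cancel₀ hs0.ne']
        exact_mod_cast this
      rw [this, one_smul]
    rw [msqrt_eq hM hB hBB, hBdef]
    rw [trace_smul, trace_add, trace_smul, hTr, trace_one]
    have hcs : c * s = Real.sqrt s := by
      have h2 : Real.sqrt s ≠ 0 := (Real.sqrt_pos.mpr hs0).ne'
      rw [hcdef, inv_mul_eq_div, div_eq_iff h2, Real.mul_self_sqrt hs]
    have : Real.sqrt (M.trace.re + 2 * Real.sqrt M.det.re) = Real.sqrt s := by rw [hsdef]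
    rw [this, ← hcs, hsdef]
    simp only [Fintype.card_fin, smul_eq_mul]
    push_cast
    ring



lemma psd_det_re_nonneg {n : ℕ} {M : Matrix (Fin n) (Fin n) ℂ} (hM : M.PosSemidef) :
    0 ≤ M.det.re := by
  have h2 := congrArg Complex.re (psd_det_sq hM)
  rw [Complex.ofReal_re] at h2
  nlinarith [sq_nonneg (Real.sqrt M.det.re)]

lemma fid_diag {ρ : Matrix (Fin 2) (Fin 2) ℂ} (hρ : IsDensity ρ) {p q : ℝ}
    (hp : 0 ≤ p) (hq : 0 ≤ q) :
    fid ρ (diagonal ![(p : ℂ), (q : ℂ)]) =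
      p * (ρ 0 0).re + q * (ρ 1 1).re + 2 * Real.sqrt (p * q * ρ.det.re) := by
  have hp' : ((p : ℝ) : ℂ) = (Real.sqrt p : ℂ) * (Real.sqrt p : ℂ) := by
    rw [← Complex.ofReal_mul, Real.mul_self_sqrt hp]
  have hq' : ((q : ℝ) : ℂ) = (Real.sqrt q : ℂ) * (Real.sqrt q : ℂ) := by
    rw [← Complex.ofReal_mul, Real.mul_self_sqrt hq]
  set S : Matrix (Fin 2) (Fin 2) ℂ :=
    diagonal ![(Real.sqrt p : ℂ), (Real.sqrt q : ℂ)] with hSdef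
  have hσpsd : (diagonal ![(p : ℂ), (q : ℂ)]).PosSemidef := by
    refine posSemidef_diagonal_iff.mpr fun i => ?_
    fin_cases i <;> simp [Complex.zero_le_real, hp, hq]
  have hSpsd : S.PosSemidef := by
    refine posSemidef_diagonal_iff.mpr fun i => ?_
    fin_cases i <;> simp [Complex.zero_le_real, Real.sqrt_nonneg]
  have hSS : S * S = diagonal ![(p : ℂ), (q : ℂ)] := by
    ext i j
    fin_cases i <;> fin_cases j <;>
      simp [hSdef, mul_apply, Fin.sum_univ_two, Matrix.diagonal, hp', hq']
  have hmsσ : msqrt (diagonal ![(p : ℂ), (q : ℂ)]) = S := msqrt_eq hσpsd hSpsd hSS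
  have hSH : Sᴴ = S := hSpsd.1
  set M : Matrix (Fin 2) (Fin 2) ℂ := S * ρ * S with hMdef
  have hMpsd : M.PosSemidef := by
    have := hρ.1.mul_mul_conjTranspose_same S
    rwa [hSH] at this
  have hfid : fid ρ (diagonal ![(p : ℂ), (q : ℂ)]) = ((msqrt M).trace.re) ^ 2 := by
    rw [fid, hmsσ]
  rw [hfid, trace_msqrt_fin2 hMpsd, Complex.ofReal_re]
  have hM00 : M 0 0 = (p : ℂ) * ρ 0 0 := by
    simp [hMdef, hSdef, mul_apply, Fin.sum_univ_two, Matrix.diagonal]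
    rw [hp']
    ring
  have hM11 : M 1 1 = (q : ℂ) * ρ 1 1 := by
    simp [hMdef, hSdef, mul_apply, Fin.sum_univ_two, Matrix.diagonal]
    rw [hq']
    ring
  have hTr : M.trace.re = p * (ρ 0 0).re + q * (ρ 1 1).re := by
    rw [trace_fin_two, hM00, hM11]
    simp [Complex.add_re, Complex.re_ofReal_mul]
  have hDet : M.det.re = p * q * ρ.det.re := by
    have h1 : M.det = ((p * q : ℝ) : ℂ) * ρ.det := by
      rw [hMdef, det_mul, det_mul, hSdef, det_diagonal, Fin.prod_univ_two]
      simp only [Matrix.cons_val_zero, Matrix.cons_val_one, Matrix.head_cons]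
      rw [Complex.ofReal_mul, hp', hq']
      ring
    rw [h1, Complex.re_ofReal_mul]
  rw [hTr, hDet]
  have ha : 0 ≤ (ρ 0 0).re := (Complex.nonneg_iff.mp (psd_diag_nonneg hρ.1 0)).1
  have hd : 0 ≤ (ρ 1 1).re := (Complex.nonneg_iff.mp (psd_diag_nonneg hρ.1 1)).1
  have hΔ : 0 ≤ ρ.det.re := psd_det_re_nonneg hρ.1
  rw [Real.sq_sqrt (by positivity)]



lemma cs_aux {X Rh : ℝ} (h : X ^ 2 ≤ Rh ^ 2) (hRh : 0 ≤ Rh) : X ≤ Rh := by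
  calc X ≤ |X| := le_abs_self X
    _ = Real.sqrt (X ^ 2) := (Real.sqrt_sq_eq_abs X).symm
    _ ≤ Real.sqrt (Rh ^ 2) := Real.sqrt_le_sqrt h
    _ = Rh := Real.sqrt_sq hRh

lemma opt_ub (a d Δ p q : ℝ) (had : a + d = 1) (hΔ : 0 ≤ Δ)
    (hp : 0 ≤ p) (hq : 0 ≤ q) (hpq : p + q = 1) :
    p * a + q * d + 2 * Real.sqrt (p * q * Δ) ≤
      1 / 2 + (1 / 2) * Real.sqrt ((a - d) ^ 2 + 4 * Δ) := by
  have hpqn : 0 ≤ p * q := mul_nonneg hp hq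
  have hu0 : 0 ≤ Real.sqrt (p * q) := Real.sqrt_nonneg _
  have hu2 : Real.sqrt (p * q) ^ 2 = p * q := Real.sq_sqrt hpqn
  have hw0 : 0 ≤ Real.sqrt Δ := Real.sqrt_nonneg _
  have hw2 : Real.sqrt Δ ^ 2 = Δ := Real.sq_sqrt hΔ
  have hR0 : 0 ≤ Real.sqrt ((a - d) ^ 2 + 4 * Δ) := Real.sqrt_nonneg _
  have hR2 : Real.sqrt ((a - d) ^ 2 + 4 * Δ) ^ 2 = (a - d) ^ 2 + 4 * Δ :=
    Real.sq_sqrt (by positivity)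
  have hsq : Real.sqrt (p * q * Δ) = Real.sqrt (p * q) * Real.sqrt Δ :=
    Real.sqrt_mul hpqn _
  rw [hsq]
  generalize hT : Real.sqrt (p * q) = u at *
  generalize hW : Real.sqrt Δ = w at *
  generalize hRR : Real.sqrt ((a - d) ^ 2 + 4 * Δ) = R at *
  have key : ((p - 1/2) * (a - d) + 2 * u * w) ^ 2 ≤ (R / 2) ^ 2 := by
    have expand : ((p - 1/2) * (a - d) + 2 * u * w) ^ 2 +
        (2 * (p - 1/2) * w - u * (a - d)) ^ 2 =
        ((p - 1/2) ^ 2 + u ^ 2) * ((a - d) ^ 2 + 4 * w ^ 2) := by ring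
    have htu : (p - 1/2) ^ 2 + u ^ 2 = 1/4 := by
      rw [hu2]; linear_combination p * hpq
    have h1 : ((p - 1/2) ^ 2 + u ^ 2) * ((a - d) ^ 2 + 4 * w ^ 2) = (R / 2) ^ 2 := by
      rw [htu, hw2]; linarith [hR2]
    linarith [sq_nonneg (2 * (p - 1/2) * w - u * (a - d)), expand, h1]
  have key2 : (p - 1/2) * (a - d) + 2 * u * w ≤ R / 2 := cs_aux key (by linarith)
  have hlin : p * a + q * d = 1/2 + (p - 1/2) * (a - d) := by
    linear_combination d * hpq + (1/2) * had
  linarith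

lemma opt_ach (a d Δ : ℝ) (had : a + d = 1) (hΔ : 0 ≤ Δ) :
    ∃ p q : ℝ, 0 ≤ p ∧ 0 ≤ q ∧ p + q = 1 ∧
      p * a + q * d + 2 * Real.sqrt (p * q * Δ) =
        1 / 2 + (1 / 2) * Real.sqrt ((a - d) ^ 2 + 4 * Δ) := by
  have hR0 : 0 ≤ Real.sqrt ((a - d) ^ 2 + 4 * Δ) := Real.sqrt_nonneg _
  have hR2 : Real.sqrt ((a - d) ^ 2 + 4 * Δ) ^ 2 = (a - d) ^ 2 + 4 * Δ :=
    Real.sq_sqrt (by positivity)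
  generalize hRR : Real.sqrt ((a - d) ^ 2 + 4 * Δ) = R at *
  rcases eq_or_lt_of_le hR0 with h0 | h0
  · have hc0 : a - d = 0 := by nlinarith
    have hΔ0 : Δ = 0 := by nlinarith
    refine ⟨1/2, 1/2, by norm_num, by norm_num, by norm_num, ?_⟩
    rw [hΔ0, ← h0]
    norm_num
    linarith
  · refine ⟨1/2 + (a - d) / (2 * R), 1/2 - (a - d) / (2 * R), ?_, ?_, by ring, ?_⟩
    · have hcR : -R ≤ a - d := by nlinarith
      have : -(1/2) ≤ (a - d) / (2 * R) := by
        rw [le_div_iff₀ (by linarith)]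
        linarith
      linarith
    · have hcR : a - d ≤ R := by nlinarith
      have : (a - d) / (2 * R) ≤ 1/2 := by
        rw [div_le_iff₀ (by linarith)]
        linarith
      linarith
    · have hpq : (1/2 + (a - d) / (2 * R)) * (1/2 - (a - d) / (2 * R)) * Δ = (Δ / R) ^ 2 := by
        have hRne : R ≠ 0 := ne_of_gt h0
        field_simp
        linear_combination Δ * hR2
      rw [hpq, Real.sqrt_sq (div_nonneg hΔ (le_of_lt h0))]
      have hRne : R ≠ 0 := ne_of_gt h0
      field_simp
      linear_combination R * had - hR2



lemma incoherent_form {σ : Matrix (Fin 2) (Fin 2) ℂ} (h : IsIncoherent σ) :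
    ∃ p q : ℝ, 0 ≤ p ∧ 0 ≤ q ∧ p + q = 1 ∧ σ = diagonal ![(p : ℂ), (q : ℂ)] := by
  have h0 := Complex.nonneg_iff.mp (psd_diag_nonneg h.1.1 0)
  have h1 := Complex.nonneg_iff.mp (psd_diag_nonneg h.1.1 1)
  refine ⟨(σ 0 0).re, (σ 1 1).re, h0.1, h1.1, ?_, ?_⟩
  · have := congrArg Complex.re h.1.2
    rw [trace_fin_two] at this
    simpa using this
  · ext i j
    fin_cases i <;> fin_cases j
    · simp [Matrix.diagonal]
      exact Complex.ext rfl h0.2.symm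
    · simpa [Matrix.diagonal] using h.2 (show (0 : Fin 2) ≠ 1 by decide)
    · simpa [Matrix.diagonal] using h.2 (show (1 : Fin 2) ≠ 0 by decide)
    · simp [Matrix.diagonal]
      exact Complex.ext rfl h1.2.symm

/-- The geometric measure of coherence of any qubit state. -/
theorem geometric_coherence_qubit (ρ : Matrix (Fin 2) (Fin 2) ℂ) (hρ : IsDensity ρ) :
    Cg ρ = 1 / 2 - (1 / 2) * Real.sqrt (1 - 4 * (‖ρ 0 1‖) ^ 2) := by
  
  have hpsd := hρ.1
  have ha0 := Complex.nonneg_iff.mp (psd_diag_nonneg hpsd 0)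
  have hd0 := Complex.nonneg_iff.mp (psd_diag_nonneg hpsd 1)
  set a : ℝ := (ρ 0 0).re with hadef
  set b : ℝ := (ρ 1 1).re with hbdef
  have hρ00 : ρ 0 0 = (a : ℂ) := Complex.ext (by simp [hadef]) (by simp [← ha0.2])
  have hρ11 : ρ 1 1 = (b : ℂ) := Complex.ext (by simp [hbdef]) (by simp [← hd0.2])
  have had : a + b = 1 := by
    have := congrArg Complex.re hρ.2
    rw [trace_fin_two] at this
    simpa using this
  have hΔ0 : 0 ≤ ρ.det.re := psd_det_re_nonneg hpsd
  have h10 : ρ 1 0 = starRingEnd ℂ (ρ 0 1) := by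
    have := hpsd.1
    rw [Matrix.IsHermitian] at this
    have := congrFun (congrFun this 1) 0
    simpa [conjTranspose_apply] using this.symm
  have hdetre : ρ.det.re = a * b - Complex.normSq (ρ 0 1) := by
    have hdet : ρ.det = (a : ℂ) * (b : ℂ) - ((Complex.normSq (ρ 0 1) : ℝ) : ℂ) := by
      rw [det_fin_two, hρ00, hρ11, h10, Complex.mul_conj]
    rw [hdet]
    simp
  have hkey : (a - b) ^ 2 + 4 * ρ.det.re = 1 - 4 * (‖ρ 0 1‖) ^ 2 := by
    rw [Complex.sq_norm, hdetre]
    linear_combination (a + b + 1) * had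
  obtain ⟨p, q, hp, hq, hpq, hval⟩ := opt_ach a b ρ.det.re had hΔ0
  have hginc : IsIncoherent (diagonal ![(p : ℂ), (q : ℂ)]) := by
    refine ⟨⟨posSemidef_diagonal_iff.mpr fun i => ?_, ?_⟩, isDiag_diagonal _⟩
    · fin_cases i <;> simp [Complex.zero_le_real, hp, hq]
    · rw [trace_diagonal, Fin.sum_univ_two]
      simp only [Matrix.cons_val_zero, Matrix.cons_val_one, Matrix.head_cons]
      rw [← Complex.ofReal_add, hpq]
      norm_num
  have hgreat : IsGreatest {x : ℝ | ∃ σ : Matrix (Fin 2) (Fin 2) ℂ, IsIncoherent σ ∧ x = fid ρ σ}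
      (1 / 2 + (1 / 2) * Real.sqrt (1 - 4 * (‖ρ 0 1‖) ^ 2)) := by
    constructor
    · refine ⟨diagonal ![(p : ℂ), (q : ℂ)], hginc, ?_⟩
      rw [fid_diag hρ hp hq, ← hadef, ← hbdef, hval, hkey]
    · rintro x ⟨σ, hσ, rfl⟩
      obtain ⟨p', q', hp', hq', hpq', rfl⟩ := incoherent_form hσ
      rw [fid_diag hρ hp' hq', ← hadef, ← hbdef, ← hkey]
      exact opt_ub a b ρ.det.re p' q' had hΔ0 hp' hq' hpq'
  rw [Cg, hgreat.csSup_eq]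
  ring
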